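/- arXiv:2004.13541 — 8 statements merged into one kernel-verified Lean document; each statement's English description precedes it below -/
import Mathlib

section
/- Let (Ω, F, P) be a probability space and X : Ω → [0, ∞) an F-measurable function (finite everywhere). Let (aₙ) be a sequence of positive reals such that aₙ⁻¹ → 0 and ∑ₙ aₙ⁻¹ = ∞. Define A₁ := {X ≥ a₁⁻¹} and inductively Aₙ := {X ≥ aₙ⁻¹ + ∑_{j<n} a_j⁻¹ · 1_{A_j}}. Then X(ω) = ∑ₙ aₙ⁻¹ · 1_{Aₙ}(ω) for every ω ∈ Ω. -/
open MeasureTheory Filter Topology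

noncomputable def partialS (X : Ω → ℝ) (a : ℕ → ℝ) : ℕ → Ω → ℝ
  | 0, _ => 0
  | (n+1), ω => partialS X a n ω + (a n)⁻¹ * (if (a n)⁻¹ + partialS X a n ω ≤ X ω then 1 else 0)

/-- `Aset X a n` is the set `Aₙ₊₁ = {X ≥ aₙ₊₁⁻¹ + ∑_{j<n+1} a_j⁻¹ 1_{A_j}}` (0-indexed). -/
noncomputable def Aset (X : Ω → ℝ) (a : ℕ → ℝ) (n : ℕ) : Set Ω :=
  {ω | (a n)⁻¹ + partialS X a n ω ≤ X ω}

/-!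
The expansion is greedy: the step `aₙ⁻¹` is taken exactly when it does not overshoot `X ω`, so
the partial sums stay below `X ω` and the series converges to some `L ≤ X ω`. If `L < X ω`, then
once `aₙ⁻¹ ≤ X ω - L` every step is taken, so the series agrees eventually with `∑ aₙ⁻¹`, which
would then converge.
-/

section Greedy

variable {Ω : Type*} {X : Ω → ℝ} {a : ℕ → ℝ} {ω : Ω}

theorem partialS_succ (n : ℕ) :
    partialS X a (n + 1) ω = partialS X a n ω + (a n)⁻¹ * (Aset X a n).indicator 1 ω := by
  rfl

theorem sum_range_indicator_Aset_eq_partialS (n : ℕ) :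
    ∑ i ∈ Finset.range n, (a i)⁻¹ * (Aset X a i).indicator 1 ω = partialS X a n ω := by
  induction n with
  | zero => simp [partialS]
  | succ n ih => rw [Finset.sum_range_succ, ih, partialS_succ]

theorem partialS_le (hX0 : 0 ≤ X ω) (n : ℕ) : partialS X a n ω ≤ X ω := by
  induction n with
  | zero => exact hX0
  | succ n ih =>
    by_cases h : ω ∈ Aset X a n
    · rw [partialS_succ, Set.indicator_of_mem h, Pi.one_apply, mul_one, add_comm]
      exact h
    · rwa [partialS_succ, Set.indicator_of_notMem h, mul_zero, add_zero]

theorem eventually_mem_Aset_of_partialS_le {L : ℝ} (hvan : Tendsto (fun n => (a n)⁻¹) atTop (𝓝 0))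
    (hS : ∀ n, partialS X a n ω ≤ L) (hL : L < X ω) : ∀ᶠ n in atTop, ω ∈ Aset X a n := by
  filter_upwards [hvan.eventually (eventually_le_nhds (sub_pos.2 hL))] with n hn
  show (a n)⁻¹ + partialS X a n ω ≤ X ω
  linarith [hS n]

end Greedy

theorem stmt0_general {Ω : Type*}
    (X : Ω → ℝ) (hX0 : ∀ ω, 0 ≤ X ω)
    (a : ℕ → ℝ) (ha : ∀ n, 0 < a n)
    (hvan : Tendsto (fun n => (a n)⁻¹) atTop (𝓝 0))
    (hdiv : ¬ Summable (fun n => (a n)⁻¹)) :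
    ∀ ω, HasSum (fun n => (a n)⁻¹ * (Aset X a n).indicator (1 : Ω → ℝ) ω) (X ω) := by
  intro ω
  set f := fun n => (a n)⁻¹ * (Aset X a n).indicator (1 : Ω → ℝ) ω
  have hf0 : ∀ n, 0 ≤ f n := fun n =>
    mul_nonneg (inv_nonneg.2 (ha n).le) (Set.indicator_nonneg (fun _ _ => zero_le_one) ω)
  have hbound : ∀ n, ∑ i ∈ Finset.range n, f i ≤ X ω := fun n =>
    (sum_range_indicator_Aset_eq_partialS n).trans_le (partialS_le (hX0 ω) n)
  have hf : Summable f := summable_of_sum_range_le hf0 hbound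
  refine hf.hasSum_iff.2 (le_antisymm (Real.tsum_le_of_sum_range_le hf0 hbound) ?_)
  by_contra! hlt
  have hS : ∀ n, partialS X a n ω ≤ ∑' n, f n := fun n =>
    sum_range_indicator_Aset_eq_partialS (X := X) n ▸ hf.sum_le_tsum _ (fun i _ => hf0 i)
  refine hdiv (hf.congr_atTop ?_)
  filter_upwards [eventually_mem_Aset_of_partialS_le hvan hS hlt] with n hn
  simp [f, Set.indicator_of_mem hn]

theorem stmt0 {Ω : Type*} [MeasurableSpace Ω] (P : Measure Ω) [IsProbabilityMeasure P]
    (X : Ω → ℝ) (hX : Measurable X) (hX0 : ∀ ω, 0 ≤ X ω)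
    (a : ℕ → ℝ) (ha : ∀ n, 0 < a n)
    (hvan : Tendsto (fun n => (a n)⁻¹) atTop (𝓝 0))
    (hdiv : ¬ Summable (fun n => (a n)⁻¹)) :
    ∀ ω, HasSum (fun n => (a n)⁻¹ * (Aset X a n).indicator (1 : Ω → ℝ) ω) (X ω) :=
  stmt0_general X hX0 a ha hvan hdiv
end

section
/- Let (Ω, F, P) be a probability space, X : Ω → [0, ∞) measurable and finite everywhere, and (aₙ) positive reals with aₙ⁻¹ → 0 and ∑ aₙ⁻¹ = ∞. With Aₙ defined inductively as A₁ = {X ≥ a₁⁻¹}, Aₙ = {X ≥ aₙ⁻¹ + ∑_{j<n} a_j⁻¹ 1_{A_j}}, for every ω ∈ Ω there are infinitely many n with ω ∉ Aₙ. -/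
open MeasureTheory Filter Topology

/-!
Write `Sₙ(ω) = ∑_{j<n} a_j⁻¹ 1_{A_j}(ω)`. The set `Aₙ` is exactly where adding the next
increment `aₙ⁻¹` keeps `Sₙ` below `X`, so `Sₙ(ω) ≤ X(ω)` for all `n`. If `ω` belonged to all
`Aₙ` with `n ≥ N`, then `Sₙ(ω) - S_N(ω)` would be the partial sums of the tail `∑_{j ≥ N} a_j⁻¹`,
which would therefore be bounded, making `∑ aₙ⁻¹` summable.
-/

section partialS

variable {Ω : Type*} {X : Ω → ℝ} {a : ℕ → ℝ} {ω : Ω}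

theorem partialS_succ_of_mem {n : ℕ} (h : ω ∈ Aset X a n) :
    partialS X a (n + 1) ω = partialS X a n ω + (a n)⁻¹ := by
  have h' : (a n)⁻¹ + partialS X a n ω ≤ X ω := h
  rw [partialS, if_pos h', mul_one]

theorem partialS_succ_of_notMem {n : ℕ} (h : ω ∉ Aset X a n) :
    partialS X a (n + 1) ω = partialS X a n ω := by
  have h' : ¬(a n)⁻¹ + partialS X a n ω ≤ X ω := h
  rw [partialS, if_neg h', mul_zero, add_zero]

theorem partialS_add_of_forall_mem {N : ℕ} (h : ∀ n ≥ N, ω ∈ Aset X a n) (k : ℕ) :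
    partialS X a (N + k) ω = partialS X a N ω + ∑ j ∈ Finset.range k, (a (N + j))⁻¹ := by
  induction k with
  | zero => simp
  | succ k ih =>
    rw [← add_assoc, partialS_succ_of_mem (h _ (Nat.le_add_right N k)), ih,
      Finset.sum_range_succ, add_assoc]

end partialS

theorem stmt2_general {Ω : Type*}
    (X : Ω → ℝ) (hX0 : ∀ ω, 0 ≤ X ω)
    (a : ℕ → ℝ) (ha : ∀ n, 0 < a n)
    (hdiv : ¬ Summable (fun n => (a n)⁻¹)) :
    ∀ ω, {n : ℕ | ω ∉ Aset X a n}.Infinite := by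
  intro ω
  rw [← Nat.frequently_atTop_iff_infinite, frequently_atTop]
  by_contra! ⟨N, hN⟩
  have htail_bdd : ∀ k, ∑ j ∈ Finset.range k, (a (N + j))⁻¹ ≤ X ω - partialS X a N ω := by
    intro k
    have hle := partialS_le (a := a) (hX0 ω) (N + k)
    rw [partialS_add_of_forall_mem hN] at hle
    linarith
  have htail : Summable fun j => (a (j + N))⁻¹ := by
    simp_rw [add_comm _ N]
    exact summable_of_sum_range_le (fun j => (inv_pos.mpr (ha _)).le) htail_bdd
  exact hdiv ((summable_nat_add_iff N).mp htail)

theorem stmt2 {Ω : Type*} [MeasurableSpace Ω] (P : Measure Ω) [IsProbabilityMeasure P]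
    (X : Ω → ℝ) (hX : Measurable X) (hX0 : ∀ ω, 0 ≤ X ω)
    (a : ℕ → ℝ) (ha : ∀ n, 0 < a n)
    (hvan : Tendsto (fun n => (a n)⁻¹) atTop (𝓝 0))
    (hdiv : ¬ Summable (fun n => (a n)⁻¹)) :
    ∀ ω, {n : ℕ | ω ∉ Aset X a n}.Infinite :=
  stmt2_general X hX0 a ha hdiv
end

section
/- Let (Ω, F, P) be a probability space and X : Ω → [0, ∞) an integrable (L¹) random variable. Let (aₙ) be positive reals with aₙ⁻¹ → 0 and ∑ aₙ⁻¹ = ∞, and set Hₙ(a) := ∑_{j=1}^n a_j⁻¹. Then ∑_{n=1}^∞ aₙ⁻¹ · P(X ≥ Hₙ(a)) ≤ E[X]. -/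
/-!
With `H n = ∑_{j<n} a_j⁻¹`, the left side is a lower Riemann sum, over the partition
`0 = H 0 ≤ H 1 ≤ ⋯`, of the antitone tail function `t ↦ P(X ≥ t)`; by the layer cake formula the
integral of that function over `(0, ∞)` is `E[X]`.
-/

open MeasureTheory Filter Topology

open Set ENNReal

theorem tsum_ofReal_sub_mul_le_setLIntegral_Ioi {g : ℝ → ℝ≥0∞} (hg : Antitone g) {H : ℕ → ℝ}
    (hH : Monotone H) :
    ∑' n, ENNReal.ofReal (H (n + 1) - H n) * g (H (n + 1)) ≤ ∫⁻ t in Ioi (H 0), g t := by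
  have hterm (n : ℕ) :
      ENNReal.ofReal (H (n + 1) - H n) * g (H (n + 1)) ≤ ∫⁻ t in Ioc (H n) (H (n + 1)), g t := by
    calc ENNReal.ofReal (H (n + 1) - H n) * g (H (n + 1))
        = ∫⁻ _ in Ioc (H n) (H (n + 1)), g (H (n + 1)) := by
          rw [setLIntegral_const, Real.volume_Ioc, mul_comm]
      _ ≤ ∫⁻ t in Ioc (H n) (H (n + 1)), g t :=
          setLIntegral_mono hg.measurable fun t ht => hg ht.2
  calc ∑' n, ENNReal.ofReal (H (n + 1) - H n) * g (H (n + 1))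
      ≤ ∑' n, ∫⁻ t in Ioc (H n) (H (n + 1)), g t := ENNReal.tsum_le_tsum hterm
    _ = ∫⁻ t in ⋃ n, Ioc (H n) (H (n + 1)), g t :=
        (lintegral_iUnion (fun _ => measurableSet_Ioc) hH.pairwise_disjoint_on_Ioc_succ g).symm
    _ ≤ ∫⁻ t in Ioi (H 0), g t :=
        lintegral_mono_set <| iUnion_subset fun n _ ht =>
          (hH n.zero_le).trans_lt ht.1

theorem stmt3_general {Ω : Type*} [MeasurableSpace Ω] (P : Measure Ω)
    (X : Ω → ℝ) (hX0 : ∀ ω, 0 ≤ X ω) (hint : Integrable X P)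
    (a : ℕ → ℝ) (ha : ∀ n, 0 < a n) :
    ∑' n : ℕ, ENNReal.ofReal (a n)⁻¹ *
        P {ω | ∑ j ∈ Finset.range (n + 1), (a j)⁻¹ ≤ X ω}
      ≤ ENNReal.ofReal (∫ ω, X ω ∂P) := by
  have hH : Monotone fun n => ∑ j ∈ Finset.range n, (a j)⁻¹ :=
    monotone_nat_of_le_succ fun n => by simp [Finset.sum_range_succ, (ha n).le]
  have hg : Antitone fun t => P {ω | t ≤ X ω} := fun _ _ hst => measure_mono fun _ h => hst.trans h
  rw [ofReal_integral_eq_lintegral_ofReal hint (.of_forall hX0),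
    lintegral_eq_lintegral_meas_le P (.of_forall hX0) hint.aemeasurable]
  simpa [Finset.sum_range_succ] using tsum_ofReal_sub_mul_le_setLIntegral_Ioi hg hH

theorem stmt3 {Ω : Type*} [MeasurableSpace Ω] (P : Measure Ω) [IsProbabilityMeasure P]
    (X : Ω → ℝ) (hX0 : ∀ ω, 0 ≤ X ω) (hint : Integrable X P)
    (a : ℕ → ℝ) (ha : ∀ n, 0 < a n)
    (hvan : Tendsto (fun n => (a n)⁻¹) atTop (𝓝 0))
    (hdiv : ¬ Summable (fun n => (a n)⁻¹)) :
    ∑' n : ℕ, ENNReal.ofReal (a n)⁻¹ *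
        P {ω | ∑ j ∈ Finset.range (n + 1), (a j)⁻¹ ≤ X ω}
      ≤ ENNReal.ofReal (∫ ω, X ω ∂P) :=
  stmt3_general P X hX0 hint a ha
end

section
/- Let (Ω, F, P) be a probability space, X : Ω → [0, ∞) integrable, and (aₙ) positive reals with aₙ⁻¹ → 0 and ∑ aₙ⁻¹ = ∞. With Hₙ(a) := ∑_{j=1}^n a_j⁻¹, one has ∑_{n=1}^∞ aₙ⁻¹ · P(X ≥ Hₙ(a)) ≤ 1 + ∑_{n=1}^∞ P(X ≥ n). -/
open MeasureTheory Filter Topology Set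
open scoped ENNReal

/-!
Both sides are compared with the tail integral `∫₀^∞ P(X ≥ t) dt`, which is `E[X]` for
`X ≥ 0`. Since `t ↦ P(X ≥ t)` is antitone, the left side is a lower Riemann sum of it along
the partition `0 = H₀ ≤ H₁ ≤ ⋯` (with `Hₙ₊₁ - Hₙ = aₙ⁻¹`), while `∑ₙ P(X ≥ n)` is an upper
Riemann sum along the integers.
-/

theorem tsum_setLIntegral_Ioc_le_setLIntegral_Ioi (μ : Measure ℝ) {s : ℕ → ℝ}
    (hs : Monotone s) (f : ℝ → ℝ≥0∞) :
    ∑' n, ∫⁻ t in Ioc (s n) (s (n + 1)), f t ∂μ ≤ ∫⁻ t in Ioi (s 0), f t ∂μ := by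
  have hdisj : Pairwise (Function.onFun Disjoint fun n => Ioc (s n) (s (n + 1))) := by
    simpa only [Order.succ_eq_add_one] using hs.pairwise_disjoint_on_Ioc_succ
  rw [← lintegral_iUnion (fun _ => measurableSet_Ioc) hdisj]
  exact lintegral_mono_set <| iUnion_subset fun n =>
    Ioc_subset_Ioi_self.trans (Ioi_subset_Ioi (hs (Nat.zero_le n)))

theorem setLIntegral_Ioi_zero_eq_tsum_Ioc_natCast (μ : Measure ℝ) (f : ℝ → ℝ≥0∞) :
    ∫⁻ t in Ioi 0, f t ∂μ = ∑' n : ℕ, ∫⁻ t in Ioc (n : ℝ) (n + 1), f t ∂μ := by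
  have hunbdd : ¬BddAbove (range ((↑) : ℕ → ℝ)) := not_bddAbove_iff.2 fun x =>
    let ⟨n, hn⟩ := exists_nat_gt x
    ⟨n, mem_range_self n, hn⟩
  have hcover := iUnion_Ioc_map_succ_eq_Ioi (fun n => Nat.mono_cast (Nat.zero_le n)) hunbdd
  simp only [Order.succ_eq_add_one, Nat.cast_add, Nat.cast_one, Nat.bot_eq_zero,
    Nat.cast_zero] at hcover
  have hdisj : Pairwise (Function.onFun Disjoint fun n : ℕ => Ioc (n : ℝ) (n + 1)) := by
    simpa only [Order.succ_eq_add_one, Nat.cast_add, Nat.cast_one] using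
      (Nat.mono_cast (α := ℝ)).pairwise_disjoint_on_Ioc_succ
  rw [← hcover, lintegral_iUnion (fun _ => measurableSet_Ioc) hdisj]

variable {g : ℝ → ℝ≥0∞}

theorem Antitone.tsum_mul_le_setLIntegral_Ioi (hg : Antitone g) {s : ℕ → ℝ}
    (hs : Monotone s) :
    ∑' n, ENNReal.ofReal (s (n + 1) - s n) * g (s (n + 1)) ≤ ∫⁻ t in Ioi (s 0), g t := by
  refine le_trans (ENNReal.tsum_le_tsum fun n => ?_)
    (tsum_setLIntegral_Ioc_le_setLIntegral_Ioi volume hs g)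
  calc ENNReal.ofReal (s (n + 1) - s n) * g (s (n + 1))
      = ∫⁻ _ in Ioc (s n) (s (n + 1)), g (s (n + 1)) := by
        rw [setLIntegral_const, Real.volume_Ioc, mul_comm]
    _ ≤ ∫⁻ t in Ioc (s n) (s (n + 1)), g t :=
        setLIntegral_mono' measurableSet_Ioc fun t ht => hg ht.2

theorem Antitone.setLIntegral_Ioi_zero_le_tsum (hg : Antitone g) :
    ∫⁻ t in Ioi 0, g t ≤ ∑' n : ℕ, g n := by
  rw [setLIntegral_Ioi_zero_eq_tsum_Ioc_natCast]
  refine ENNReal.tsum_le_tsum fun n => ?_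
  calc ∫⁻ t in Ioc (n : ℝ) (n + 1), g t
      ≤ ∫⁻ _ in Ioc (n : ℝ) (n + 1), g n :=
        setLIntegral_mono' measurableSet_Ioc fun t ht => hg ht.1.le
    _ = g n := by simp

theorem stmt7_general {Ω : Type*} [MeasurableSpace Ω] (P : Measure Ω) [IsProbabilityMeasure P]
    (X : Ω → ℝ) (a : ℕ → ℝ) (ha : ∀ n, 0 < a n) :
    ∑' n : ℕ, ENNReal.ofReal (a n)⁻¹ *
        P {ω | ∑ j ∈ Finset.range (n + 1), (a j)⁻¹ ≤ X ω}
      ≤ 1 + ∑' n : ℕ, P {ω | ((n : ℝ) + 1) ≤ X ω} := by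
  set H : ℕ → ℝ := fun n => ∑ j ∈ Finset.range n, (a j)⁻¹
  set tail : ℝ → ℝ≥0∞ := fun t => P {ω | t ≤ X ω}
  have htail : Antitone tail := fun s t hst => measure_mono fun ω hω => hst.trans hω
  have hH : Monotone H := monotone_nat_of_le_succ fun n => by
    simpa [H, Finset.sum_range_succ] using (ha n).le
  have hstep : ∀ n, H (n + 1) - H n = (a n)⁻¹ := fun n => by
    simp [H, Finset.sum_range_succ]
  calc ∑' n : ℕ, ENNReal.ofReal (a n)⁻¹ * tail (H (n + 1))
      = ∑' n, ENNReal.ofReal (H (n + 1) - H n) * tail (H (n + 1)) := by simp only [hstep]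
    _ ≤ ∫⁻ t in Ioi 0, tail t := by
        simpa [H] using htail.tsum_mul_le_setLIntegral_Ioi hH
    _ ≤ ∑' n : ℕ, tail n := htail.setLIntegral_Ioi_zero_le_tsum
    _ = tail 0 + ∑' n : ℕ, tail (n + 1) := by
        simpa using tsum_eq_zero_add' (f := fun n : ℕ => tail n) ENNReal.summable
    _ ≤ 1 + ∑' n : ℕ, P {ω | ((n : ℝ) + 1) ≤ X ω} := by
        gcongr
        exact prob_le_one

theorem stmt7 {Ω : Type*} [MeasurableSpace Ω] (P : Measure Ω) [IsProbabilityMeasure P]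
    (X : Ω → ℝ) (hX0 : ∀ ω, 0 ≤ X ω) (hint : Integrable X P)
    (a : ℕ → ℝ) (ha : ∀ n, 0 < a n)
    (hvan : Tendsto (fun n => (a n)⁻¹) atTop (𝓝 0))
    (hdiv : ¬ Summable (fun n => (a n)⁻¹)) :
    ∑' n : ℕ, ENNReal.ofReal (a n)⁻¹ *
        P {ω | ∑ j ∈ Finset.range (n + 1), (a j)⁻¹ ≤ X ω}
      ≤ 1 + ∑' n : ℕ, P {ω | ((n : ℝ) + 1) ≤ X ω} :=
  stmt7_general P X a ha
end

section
/- Let (Ω, F, P) be a probability space, X : Ω → [0, ∞) integrable and almost surely ℕ-valued, and (aₙ) positive reals with aₙ⁻¹ → 0 and ∑ aₙ⁻¹ = ∞. With Hₙ(a) := ∑_{j=1}^n a_j⁻¹, one has ∑_{n=1}^∞ P(X ≥ n) ≥ ∑_{n=1}^∞ aₙ⁻¹ · P(X ≥ Hₙ(a)). -/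
/-! Write `Hₙ = ∑_{j<n} bⱼ` with `bⱼ = aⱼ⁻¹ ≥ 0`. For a fixed value `x`, the indices `n` with
`Hₙ₊₁ ≤ x` form an initial segment of `ℕ`, so the corresponding `bₙ` add up to at most `x`:
`∑ₙ bₙ 𝟙{Hₙ₊₁ ≤ X} ≤ X` pointwise. Taking expectations (Tonelli) gives
`∑ₙ bₙ P(X ≥ Hₙ₊₁) ≤ E[X]`, and for an `ℕ`-valued `X` the identity `X = ∑ₙ 𝟙{n + 1 ≤ X}` gives
`E[X] = ∑ₙ P(X ≥ n + 1)`. -/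

open MeasureTheory Filter Topology

open Finset

lemma sum_le_of_forall_partialSum_le {b : ℕ → ℝ} (hb : ∀ n, 0 ≤ b n) {s : Finset ℕ}
    (hs : s.Nonempty) {x : ℝ} (hx : ∀ n ∈ s, ∑ j ∈ range (n + 1), b j ≤ x) :
    ∑ n ∈ s, b n ≤ x := by
  have hsub : s ⊆ range (s.max' hs + 1) := fun n hn =>
    mem_range.2 (Nat.lt_succ_of_le (s.le_max' n hn))
  exact (sum_le_sum_of_subset_of_nonneg hsub fun j _ _ => hb j).trans (hx _ (s.max'_mem hs))

lemma tsum_ite_partialSum_le {b : ℕ → ℝ} (hb : ∀ n, 0 ≤ b n) (x : ℝ) :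
    ∑' n, (if ∑ j ∈ range (n + 1), b j ≤ x then ENNReal.ofReal (b n) else 0)
      ≤ ENNReal.ofReal x := by
  refine ENNReal.tsum_le_of_sum_range_le fun N => ?_
  rw [← sum_filter, ← ENNReal.ofReal_sum_of_nonneg fun n _ => hb n]
  set s := (range N).filter fun n => ∑ j ∈ range (n + 1), b j ≤ x
  rcases s.eq_empty_or_nonempty with hs | hs
  · simp [hs]
  · exact ENNReal.ofReal_le_ofReal <|
      sum_le_of_forall_partialSum_le hb hs fun n hn => (mem_filter.1 hn).2

lemma tsum_ite_add_one_le_natCast (k : ℕ) :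
    ∑' n : ℕ, (if (n : ℝ) + 1 ≤ k then 1 else 0 : ENNReal) = k := by
  have hiff : ∀ n : ℕ, (n : ℝ) + 1 ≤ k ↔ n < k := fun n => by
    rw [← Nat.cast_add_one, Nat.cast_le, Nat.add_one_le_iff]
  simp only [hiff]
  rw [tsum_eq_sum (s := range k) fun n hn => if_neg (by simpa using hn),
    Finset.sum_ite_of_true fun n hn => mem_range.1 hn]
  simp

lemma tsum_mul_measure_eq_lintegral_tsum_indicator {Ω : Type*} [MeasurableSpace Ω]
    {μ : Measure Ω} {s : ℕ → Set Ω} (hs : ∀ n, NullMeasurableSet (s n) μ) (c : ℕ → ENNReal) :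
    ∑' n, c n * μ (s n) = ∫⁻ ω, ∑' n, (s n).indicator (fun _ => c n) ω ∂μ := by
  rw [lintegral_tsum fun n => aemeasurable_const.indicator₀ (hs n)]
  exact tsum_congr fun n => (lintegral_indicator_const₀ (hs n) (c n)).symm

theorem stmt10_general {Ω : Type*} [MeasurableSpace Ω] (P : Measure Ω)
    (X : Ω → ℝ) (hint : Integrable X P)
    (hNat : ∀ᵐ ω ∂P, ∃ n : ℕ, X ω = (n : ℝ))
    (a : ℕ → ℝ) (ha : ∀ n, 0 < a n) :
    ∑' n : ℕ, ENNReal.ofReal (a n)⁻¹ *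
        P {ω | ∑ j ∈ Finset.range (n + 1), (a j)⁻¹ ≤ X ω}
      ≤ ∑' n : ℕ, P {ω | ((n : ℝ) + 1) ≤ X ω} := by
  have hle : ∀ c : ℝ, NullMeasurableSet {ω | c ≤ X ω} P := fun _ =>
    nullMeasurableSet_le aemeasurable_const hint.aemeasurable
  calc ∑' n, ENNReal.ofReal (a n)⁻¹ * P {ω | ∑ j ∈ Finset.range (n + 1), (a j)⁻¹ ≤ X ω}
      ≤ ∫⁻ ω, ENNReal.ofReal (X ω) ∂P := by
        rw [tsum_mul_measure_eq_lintegral_tsum_indicator fun _ => hle _]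
        refine lintegral_mono fun ω => ?_
        simp only [Set.indicator_apply, Set.mem_ofPred_eq]
        exact tsum_ite_partialSum_le (fun n => (inv_pos.2 (ha n)).le) (X ω)
    _ = ∫⁻ ω, ∑' n : ℕ, {ω | (n : ℝ) + 1 ≤ X ω}.indicator (fun _ => 1) ω ∂P := by
        refine lintegral_congr_ae (hNat.mono fun ω ⟨k, hk⟩ => ?_)
        simp only [Set.indicator_apply, Set.mem_ofPred_eq, hk, tsum_ite_add_one_le_natCast,
          ENNReal.ofReal_natCast]
    _ = ∑' n : ℕ, P {ω | ((n : ℝ) + 1) ≤ X ω} := by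
        rw [← tsum_mul_measure_eq_lintegral_tsum_indicator fun _ => hle _]
        simp only [one_mul]

theorem stmt10 {Ω : Type*} [MeasurableSpace Ω] (P : Measure Ω) [IsProbabilityMeasure P]
    (X : Ω → ℝ) (hX0 : ∀ ω, 0 ≤ X ω) (hint : Integrable X P)
    (hNat : ∀ᵐ ω ∂P, ∃ n : ℕ, X ω = (n : ℝ))
    (a : ℕ → ℝ) (ha : ∀ n, 0 < a n)
    (hvan : Tendsto (fun n => (a n)⁻¹) atTop (𝓝 0))
    (hdiv : ¬ Summable (fun n => (a n)⁻¹)) :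
    ∑' n : ℕ, ENNReal.ofReal (a n)⁻¹ *
        P {ω | ∑ j ∈ Finset.range (n + 1), (a j)⁻¹ ≤ X ω}
      ≤ ∑' n : ℕ, P {ω | ((n : ℝ) + 1) ≤ X ω} :=
  stmt10_general P X hint hNat a ha
end

section
/- Let (Ω, F, P) be a probability space and X : Ω → [0, ∞) an integrable random variable. Then the series ∑_{n=1}^∞ (1/n) · P(X ≥ Hₙ) converges and its sum is at most E[X], where Hₙ = ∑_{j=1}^n 1/j is the n-th harmonic number. -/
/-!
Split `(0, ∞)` at the harmonic numbers `H₀ = 0 < H₁ < H₂ < ⋯`. On the block `(Hₙ, Hₙ₊₁]`, of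
length `1/(n+1)`, the tail `t ↦ P(X ≥ t)` is at least `P(X ≥ Hₙ₊₁)`, so the `n`-th term of the series
is at most the integral of the tail over that block. The blocks are disjoint, so the series is
bounded by `∫_{(0,∞)} P(X ≥ t) dt`, which is `E[X]` by the layer-cake formula.
-/

open MeasureTheory Filter Set

namespace MeasureTheory

variable {Ω : Type*} [MeasurableSpace Ω] {μ : Measure Ω} {f : Ω → ℝ}

lemma ofReal_sub_mul_measure_le_setLIntegral_Ioc (μ : Measure Ω) (f : Ω → ℝ) (a b : ℝ) :
    ENNReal.ofReal (b - a) * μ {ω | b ≤ f ω} ≤ ∫⁻ t in Ioc a b, μ {ω | t ≤ f ω} :=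
  calc ENNReal.ofReal (b - a) * μ {ω | b ≤ f ω}
      = ∫⁻ _ in Ioc a b, μ {ω | b ≤ f ω} := by
        rw [setLIntegral_const, Real.volume_Ioc, mul_comm]
    _ ≤ ∫⁻ t in Ioc a b, μ {ω | t ≤ f ω} :=
        setLIntegral_mono' measurableSet_Ioc fun _ ht ↦
          measure_mono fun _ hω ↦ ht.2.trans hω

theorem tsum_ofReal_sub_mul_measure_le_lintegral {H : ℕ → ℝ} (hH : Monotone H) (hH0 : 0 ≤ H 0)
    (hf : 0 ≤ᵐ[μ] f) (hfm : AEMeasurable f μ) :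
    ∑' n, ENNReal.ofReal (H (n + 1) - H n) * μ {ω | H (n + 1) ≤ f ω} ≤
      ∫⁻ ω, ENNReal.ofReal (f ω) ∂μ := by
  have hdisj : Pairwise (Function.onFun Disjoint fun n ↦ Ioc (H n) (H (n + 1))) := by
    simpa using hH.pairwise_disjoint_on_Ioc_succ
  have hsub : ⋃ n, Ioc (H n) (H (n + 1)) ⊆ Ioi 0 :=
    iUnion_subset fun n _ ht ↦ (hH0.trans (hH n.zero_le)).trans_lt ht.1
  calc ∑' n, ENNReal.ofReal (H (n + 1) - H n) * μ {ω | H (n + 1) ≤ f ω}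
      ≤ ∑' n, ∫⁻ t in Ioc (H n) (H (n + 1)), μ {ω | t ≤ f ω} :=
        ENNReal.tsum_le_tsum fun n ↦ ofReal_sub_mul_measure_le_setLIntegral_Ioc μ f _ _
    _ = ∫⁻ t in ⋃ n, Ioc (H n) (H (n + 1)), μ {ω | t ≤ f ω} :=
        (lintegral_iUnion (fun _ ↦ measurableSet_Ioc) hdisj _).symm
    _ ≤ ∫⁻ t in Ioi 0, μ {ω | t ≤ f ω} := lintegral_mono_set hsub
    _ = ∫⁻ ω, ENNReal.ofReal (f ω) ∂μ := (lintegral_eq_lintegral_meas_le μ hf hfm).symm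

end MeasureTheory

theorem stmt12_general {Ω : Type*} [MeasurableSpace Ω] (P : Measure Ω)
    (X : Ω → ℝ) (hX0 : ∀ ω, 0 ≤ X ω) (hint : Integrable X P) :
    ∑' n : ℕ, ENNReal.ofReal ((n : ℝ) + 1)⁻¹ *
        P {ω | ∑ j ∈ Finset.range (n + 1), ((j : ℝ) + 1)⁻¹ ≤ X ω}
      ≤ ENNReal.ofReal (∫ ω, X ω ∂P) := by
  set H : ℕ → ℝ := fun n ↦ ∑ j ∈ Finset.range n, ((j : ℝ) + 1)⁻¹
  have hstep (n : ℕ) : H (n + 1) - H n = ((n : ℝ) + 1)⁻¹ := Finset.sum_range_succ_sub_sum _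
  have hH : Monotone H :=
    monotone_nat_of_le_succ fun n ↦ sub_nonneg.mp (hstep n ▸ by positivity)
  have hX0ae : 0 ≤ᵐ[P] X := Eventually.of_forall hX0
  rw [ofReal_integral_eq_lintegral_ofReal hint hX0ae]
  simpa only [hstep] using
    tsum_ofReal_sub_mul_measure_le_lintegral hH le_rfl hX0ae hint.aemeasurable

theorem stmt12 {Ω : Type*} [MeasurableSpace Ω] (P : Measure Ω) [IsProbabilityMeasure P]
    (X : Ω → ℝ) (hX0 : ∀ ω, 0 ≤ X ω) (hint : Integrable X P) :
    ∑' n : ℕ, ENNReal.ofReal ((n : ℝ) + 1)⁻¹ *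
        P {ω | ∑ j ∈ Finset.range (n + 1), ((j : ℝ) + 1)⁻¹ ≤ X ω}
      ≤ ENNReal.ofReal (∫ ω, X ω ∂P) :=
  stmt12_general P X hX0 hint
end

section
/- Let (Ω, F, P) be a probability space, X : Ω → [0, ∞) integrable, and 0 < δ < 1. Then ∑_{n=1}^∞ n^{-δ} · P(X ≥ ∑_{j=1}^n j^{-δ}) ≤ E[X], and this series converges. -/
/-!
By Tonelli, `∑ aₙ P(Sₙ₊₁ ≤ X) = E[∑ aₙ 1{Sₙ₊₁ ≤ X}]` with `Sₙ = a₀ + ⋯ + aₙ₋₁`. Since the partial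
sums increase, the indices `n` with `Sₙ₊₁ ≤ X(ω)` form an initial segment `{0, …, m - 1}`, so the
inner sum is `Sₘ ≤ X(ω)`.
-/

open MeasureTheory Finset

theorem sum_range_ite_partialSum_le {a : ℕ → ℝ} (ha : ∀ n, 0 ≤ a n) (x : ℝ) (m : ℕ) :
    ∑ n ∈ range m, (if ∑ j ∈ range (n + 1), a j ≤ x then ENNReal.ofReal (a n) else 0)
      ≤ ENNReal.ofReal x := by
  induction m with
  | zero => simp
  | succ m ih =>
    by_cases h : ∑ j ∈ range (m + 1), a j ≤ x
    · have hprefix : ∀ n ∈ range (m + 1), ∑ j ∈ range (n + 1), a j ≤ x := fun n hn =>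
        (sum_le_sum_of_subset_of_nonneg (range_subset_range.2 (by simpa using hn))
          fun i _ _ => ha i).trans h
      rw [sum_congr rfl fun n hn => if_pos (hprefix n hn),
        ← ENNReal.ofReal_sum_of_nonneg fun n _ => ha n]
      exact ENNReal.ofReal_le_ofReal h
    · rwa [sum_range_succ, if_neg h, add_zero]

theorem tsum_ofReal_mul_measure_partialSum_le_lintegral {Ω : Type*} [MeasurableSpace Ω]
    (μ : Measure Ω) {X : Ω → ℝ} (hX : AEMeasurable X μ) {a : ℕ → ℝ} (ha : ∀ n, 0 ≤ a n) :
    ∑' n, ENNReal.ofReal (a n) * μ {ω | ∑ j ∈ range (n + 1), a j ≤ X ω}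
      ≤ ∫⁻ ω, ENNReal.ofReal (X ω) ∂μ := by
  have hmeas (n : ℕ) : NullMeasurableSet {ω | ∑ j ∈ range (n + 1), a j ≤ X ω} μ :=
    nullMeasurableSet_le aemeasurable_const hX
  calc ∑' n, ENNReal.ofReal (a n) * μ {ω | ∑ j ∈ range (n + 1), a j ≤ X ω}
      = ∑' n, ∫⁻ ω, {ω | ∑ j ∈ range (n + 1), a j ≤ X ω}.indicator
          (fun _ => ENNReal.ofReal (a n)) ω ∂μ :=
        tsum_congr fun n => (lintegral_indicator_const₀ (hmeas n) _).symm
    _ = ∫⁻ ω, ∑' n, {ω | ∑ j ∈ range (n + 1), a j ≤ X ω}.indicator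
          (fun _ => ENNReal.ofReal (a n)) ω ∂μ :=
        (lintegral_tsum fun n => aemeasurable_const.indicator₀ (hmeas n)).symm
    _ ≤ ∫⁻ ω, ENNReal.ofReal (X ω) ∂μ := lintegral_mono fun ω => by
        simpa only [Set.indicator_apply, Set.mem_ofPred_eq] using
          ENNReal.tsum_le_of_sum_range_le (sum_range_ite_partialSum_le ha (X ω))

theorem stmt14_general {Ω : Type*} [MeasurableSpace Ω] (P : Measure Ω)
    (X : Ω → ℝ) (hX0 : ∀ ω, 0 ≤ X ω) (hint : Integrable X P)
    (δ : ℝ) :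
    ∑' n : ℕ, ENNReal.ofReal (((n : ℝ) + 1) ^ (-δ)) *
        P {ω | ∑ j ∈ Finset.range (n + 1), ((j : ℝ) + 1) ^ (-δ) ≤ X ω}
      ≤ ENNReal.ofReal (∫ ω, X ω ∂P) := by
  rw [ofReal_integral_eq_lintegral_ofReal hint (ae_of_all _ hX0)]
  exact tsum_ofReal_mul_measure_partialSum_le_lintegral P hint.aemeasurable
    fun n => by positivity

theorem stmt14 {Ω : Type*} [MeasurableSpace Ω] (P : Measure Ω) [IsProbabilityMeasure P]
    (X : Ω → ℝ) (hX0 : ∀ ω, 0 ≤ X ω) (hint : Integrable X P)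
    (δ : ℝ) (hδ0 : 0 < δ) (hδ1 : δ < 1) :
    ∑' n : ℕ, ENNReal.ofReal (((n : ℝ) + 1) ^ (-δ)) *
        P {ω | ∑ j ∈ Finset.range (n + 1), ((j : ℝ) + 1) ^ (-δ) ≤ X ω}
      ≤ ENNReal.ofReal (∫ ω, X ω ∂P) :=
  stmt14_general P X hX0 hint δ
end

section
/- Let (Ω, F, μ) be a finite measure space, X : Ω → [0, ∞) integrable with respect to μ, and (aₙ) positive reals with aₙ⁻¹ → 0 and ∑ aₙ⁻¹ = ∞. With Hₙ(a) := ∑_{j=1}^n a_j⁻¹, one has ∑_{n=1}^∞ aₙ⁻¹ · μ({X ≥ Hₙ(a)}) ≤ ∫ X dμ ≤ ∑_{n=1}^∞ aₙ⁻¹ · μ({X ≥ aₙ⁻¹}). -/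
/-!
By Tonelli, a series `∑ₙ bₙ μ{cₙ ≤ X}` is the integral of `ω ↦ ∑ₙ bₙ 1[cₙ ≤ X ω]`, so both
inequalities hold pointwise in `y = X ω`. The terms with `Hₙ(a) ≤ y` add up to at most `H_N(a) ≤ y`
for the last such `N`; the terms with `aₙ⁻¹ ≤ y` contain a whole tail of the divergent series
`∑ aₙ⁻¹` as soon as `y > 0`, because `aₙ⁻¹ → 0`.
-/

open MeasureTheory Filter Topology Finset
open scoped ENNReal

namespace ENNReal

theorem tsum_ofReal_eq_top_of_not_summable {α : Type*} {f : α → ℝ} (hf : ∀ n, 0 ≤ f n)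
    (hdiv : ¬ Summable f) : ∑' n, ENNReal.ofReal (f n) = ∞ := by
  by_contra h
  exact hdiv <| (ENNReal.summable_toReal h).congr fun n => ENNReal.toReal_ofReal (hf n)

theorem tsum_ite_sum_range_succ_le (b : ℕ → ℝ≥0∞) (y : ℝ≥0∞) :
    ∑' n, (if ∑ j ∈ range (n + 1), b j ≤ y then b n else 0) ≤ y := by
  refine ENNReal.tsum_le_of_sum_range_le fun N => ?_
  induction N with
  | zero => simp
  | succ N ih =>
    rw [sum_range_succ]
    split_ifs with hN
    · calc ∑ n ∈ range N, (if ∑ j ∈ range (n + 1), b j ≤ y then b n else 0) + b N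
          ≤ ∑ n ∈ range N, b n + b N := by
            gcongr with n; split_ifs <;> simp
        _ = ∑ j ∈ range (N + 1), b j := (sum_range_succ b N).symm
        _ ≤ y := hN
    · simpa using ih

theorem le_tsum_ite_le_of_tendsto_zero {b : ℕ → ℝ≥0∞} (hb : ∀ n, b n ≠ ∞)
    (hvan : Tendsto b atTop (𝓝 0)) (hdiv : ∑' n, b n = ∞) (y : ℝ≥0∞) :
    y ≤ ∑' n, if b n ≤ y then b n else 0 := by
  rcases eq_zero_or_pos y with rfl | hy
  · exact zero_le
  obtain ⟨N, hN⟩ := eventually_atTop.1 (hvan.eventually (gt_mem_nhds hy))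
  have htail : ∑' n, b (n + N) = ∞ := by
    have hhead : ∑ n ∈ range N, b n ≠ ∞ := ENNReal.sum_ne_top.2 fun n _ => hb n
    have hsplit := ENNReal.summable.sum_add_tsum_nat_add' (f := b) (k := N)
    rw [hdiv] at hsplit
    exact (ENNReal.add_eq_top.1 hsplit).resolve_left hhead
  calc y ≤ ∑' n, b (n + N) := htail ▸ le_top
    _ = ∑' n, (if b (n + N) ≤ y then b (n + N) else 0) :=
        tsum_congr fun n => (if_pos (hN _ (Nat.le_add_left N n)).le).symm
    _ ≤ ∑' n, if b n ≤ y then b n else 0 :=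
        ENNReal.tsum_comp_le_tsum_of_injective (add_left_injective N) _

end ENNReal

theorem tsum_mul_measure_setOf_le_eq_lintegral_tsum {Ω : Type*} [MeasurableSpace Ω]
    {μ : Measure Ω} {f : Ω → ℝ≥0∞} (hf : AEMeasurable f μ) (b c : ℕ → ℝ≥0∞) :
    ∑' n, b n * μ {ω | c n ≤ f ω} = ∫⁻ ω, ∑' n, (if c n ≤ f ω then b n else 0) ∂μ := by
  have hs : ∀ n, NullMeasurableSet {ω | c n ≤ f ω} μ :=
    fun n => nullMeasurableSet_le aemeasurable_const hf
  have hind : ∀ n ω,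
      (if c n ≤ f ω then b n else 0) = {ω | c n ≤ f ω}.indicator (fun _ => b n) ω :=
    fun n ω => by simp only [Set.indicator_apply, Set.mem_ofPred_eq]
  simp_rw [hind]
  rw [lintegral_tsum fun n => aemeasurable_const.indicator₀ (hs n)]
  exact tsum_congr fun n => by rw [lintegral_indicator_const₀ (hs n), mul_comm]

theorem stmt16_general {Ω : Type*} [MeasurableSpace Ω] (μ : Measure Ω)
    (X : Ω → ℝ) (hX0 : ∀ ω, 0 ≤ X ω) (hint : Integrable X μ)
    (a : ℕ → ℝ) (ha : ∀ n, 0 < a n)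
    (hvan : Tendsto (fun n => (a n)⁻¹) atTop (𝓝 0))
    (hdiv : ¬ Summable (fun n => (a n)⁻¹)) :
    (∑' n : ℕ, ENNReal.ofReal (a n)⁻¹ *
        μ {ω | ∑ j ∈ Finset.range (n + 1), (a j)⁻¹ ≤ X ω})
      ≤ ENNReal.ofReal (∫ ω, X ω ∂μ) ∧
    ENNReal.ofReal (∫ ω, X ω ∂μ)
      ≤ ∑' n : ℕ, ENNReal.ofReal (a n)⁻¹ * μ {ω | (a n)⁻¹ ≤ X ω} := by
  set b : ℕ → ℝ≥0∞ := fun n => ENNReal.ofReal (a n)⁻¹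
  set f : Ω → ℝ≥0∞ := fun ω => ENNReal.ofReal (X ω)
  have hf : AEMeasurable f μ := hint.aemeasurable.ennreal_ofReal
  have hb0 : ∀ n, 0 ≤ (a n)⁻¹ := fun n => (inv_pos.2 (ha n)).le
  have hint_eq : ENNReal.ofReal (∫ ω, X ω ∂μ) = ∫⁻ ω, f ω ∂μ :=
    ofReal_integral_eq_lintegral_ofReal hint (ae_of_all _ hX0)
  have hset : ∀ r : ℝ, {ω | r ≤ X ω} = {ω | ENNReal.ofReal r ≤ f ω} := fun r => by
    ext ω; exact (ENNReal.ofReal_le_ofReal_iff (hX0 ω)).symm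
  have hpartial :
      ∀ n, ENNReal.ofReal (∑ j ∈ range (n + 1), (a j)⁻¹) = ∑ j ∈ range (n + 1), b j :=
    fun n => ENNReal.ofReal_sum_of_nonneg fun j _ => hb0 j
  constructor
  · calc _ = ∑' n, b n * μ {ω | ∑ j ∈ range (n + 1), b j ≤ f ω} := by
          simp_rw [hset, hpartial]; rfl
      _ = ∫⁻ ω, ∑' n, (if ∑ j ∈ range (n + 1), b j ≤ f ω then b n else 0) ∂μ :=
          tsum_mul_measure_setOf_le_eq_lintegral_tsum hf b _
      _ ≤ ∫⁻ ω, f ω ∂μ := lintegral_mono fun ω => ENNReal.tsum_ite_sum_range_succ_le b (f ω)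
      _ = _ := hint_eq.symm
  · have hb_van : Tendsto b atTop (𝓝 0) := ENNReal.ofReal_zero ▸ ENNReal.tendsto_ofReal hvan
    have hb_div : ∑' n, b n = ∞ := ENNReal.tsum_ofReal_eq_top_of_not_summable hb0 hdiv
    calc _ = ∫⁻ ω, f ω ∂μ := hint_eq
      _ ≤ ∫⁻ ω, ∑' n, (if b n ≤ f ω then b n else 0) ∂μ := lintegral_mono fun ω =>
          ENNReal.le_tsum_ite_le_of_tendsto_zero (fun _ => ENNReal.ofReal_ne_top) hb_van hb_div _
      _ = ∑' n, b n * μ {ω | b n ≤ f ω} :=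
          (tsum_mul_measure_setOf_le_eq_lintegral_tsum hf b b).symm
      _ = _ := by simp_rw [hset]; rfl

theorem stmt16 {Ω : Type*} [MeasurableSpace Ω] (μ : Measure Ω) [IsFiniteMeasure μ]
    (X : Ω → ℝ) (hX0 : ∀ ω, 0 ≤ X ω) (hint : Integrable X μ)
    (a : ℕ → ℝ) (ha : ∀ n, 0 < a n)
    (hvan : Tendsto (fun n => (a n)⁻¹) atTop (𝓝 0))
    (hdiv : ¬ Summable (fun n => (a n)⁻¹)) :
    (∑' n : ℕ, ENNReal.ofReal (a n)⁻¹ *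
        μ {ω | ∑ j ∈ Finset.range (n + 1), (a j)⁻¹ ≤ X ω})
      ≤ ENNReal.ofReal (∫ ω, X ω ∂μ) ∧
    ENNReal.ofReal (∫ ω, X ω ∂μ)
      ≤ ∑' n : ℕ, ENNReal.ofReal (a n)⁻¹ * μ {ω | (a n)⁻¹ ≤ X ω} :=
  stmt16_general μ X hX0 hint a ha hvan hdiv
end
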